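/- Let a > 0, 0 < b < c, 0 ≤ z₁ ≤ 1, 0 ≤ z₂ ≤ 1 and 0 ≤ z₃ < 1. Then |(1−z₂z₃)^a ₂F₁(a,b;c;z₁z₂z₃) − (1−z₃)^a ₂F₁(a,b;c;z₁z₃)| ≤ (1/4) · (1−z₂z₃)^a/(1−z₃)^a. -/

import Mathlib

open Real MeasureTheory

/-- Classical Euler beta function `B(x,y) = ∫₀¹ t^(x-1) (1-t)^(y-1) dt`. -/
noncomputable def eulerBeta (x y : ℝ) : ℝ :=
  ∫ t in (0:ℝ)..1, t ^ (x - 1) * (1 - t) ^ (y - 1)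

/-- `λ_{x,y} = x^x y^y / (x+y)^(x+y)`; the convention `0^0 = 1` is automatic for `rpow`. -/
noncomputable def lam (x y : ℝ) : ℝ := x ^ x * y ^ y / (x + y) ^ (x + y)

/-- Pochhammer symbol `(x)_n = x (x+1) ⋯ (x+n-1)`. -/
noncomputable def poch (x : ℝ) (n : ℕ) : ℝ := ∏ k ∈ Finset.range n, (x + k)

/-- Confluent hypergeometric (Kummer) function `₁F₁(b;c;z)`. -/
noncomputable def oneF1 (b c z : ℝ) : ℝ :=
  ∑' n : ℕ, poch b n / poch c n * z ^ n / (Nat.factorial n : ℝ)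

/-- Gauss hypergeometric function `₂F₁(a,b;c;z)`. -/
noncomputable def twoF1 (a b c z : ℝ) : ℝ :=
  ∑' n : ℕ, poch a n * poch b n / poch c n * z ^ n / (Nat.factorial n : ℝ)

/-!
Put `F(y) = ₂F₁(a,b;c;z₁y) = ∑ dₙ yⁿ`. Since `(b+n) z₁ ≤ c+n`, the coefficients satisfy
`(n+1) dₙ₊₁ ≤ (a+n) dₙ`, which gives `(1-y) F' ≤ a F`; hence `G(y) = (1-y)^a F(y)` decreases on
`[0,1)` from `G(0) = 1`. For `x = z₂z₃ ≤ y = z₃`, `s = (1-x)^a`, `t = (1-y)^a` this gives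
`0 ≤ G(x) - G(y)` and `G(x) ≤ 1`, while `F(x) ≤ F(y)` gives `G(y) ≥ (t/s) G(x)`. So
`0 ≤ G(x) - G(y) ≤ 1 - t/s ≤ s/(4t)`, the last step being `4r(1-r) ≤ 1`.
-/

open Real Filter Topology

lemma summable_of_norm_succ_le_of_tendsto {α : Type*} [SeminormedAddCommGroup α]
    [CompleteSpace α] {f : ℕ → α} {ρ : ℕ → ℝ} {l : ℝ} (hl : l < 1)
    (hρ : Tendsto ρ atTop (𝓝 l)) (hf : ∀ n, ‖f (n + 1)‖ ≤ ρ n * ‖f n‖) : Summable f := by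
  obtain ⟨r, hlr, hr1⟩ := exists_between hl
  refine summable_of_ratio_norm_eventually_le hr1 ?_
  filter_upwards [hρ.eventually_lt_const hlr] with n hn
  exact (hf n).trans (mul_le_mul_of_nonneg_right hn.le (norm_nonneg _))

lemma tendsto_add_natCast_div_natCast_add_one (x : ℝ) :
    Tendsto (fun n : ℕ => (x + n) / (n + 1)) atTop (𝓝 1) := by
  simpa [add_comm] using tendsto_add_mul_div_add_mul_atTop_nhds x 1 1 one_ne_zero

/-- The ratios `dₙ₊₁ / dₙ` are at most those of the coefficients `(a)ₙ / n!` of `(1 - y)^(-a)`. -/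
structure CoeffRatioLE (a : ℝ) (d : ℕ → ℝ) : Prop where
  nonneg : ∀ n, 0 ≤ d n
  succ_mul_le : ∀ n : ℕ, ((n : ℝ) + 1) * d (n + 1) ≤ (a + n) * d n

namespace CoeffRatioLE

variable {a : ℝ} {d : ℕ → ℝ}

lemma succ_mul_succ (h : CoeffRatioLE a d) :
    CoeffRatioLE (a + 1) fun m : ℕ => ((m : ℝ) + 1) * d (m + 1) where
  nonneg m := mul_nonneg (by positivity) (h.nonneg _)
  succ_mul_le m := by
    have := mul_le_mul_of_nonneg_left (h.succ_mul_le (m + 1)) (by positivity : (0 : ℝ) ≤ m + 1)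
    push_cast at this ⊢
    linarith

lemma summable_mul_pow (h : CoeffRatioLE a d) {y : ℝ} (hy : |y| < 1) :
    Summable fun n => d n * y ^ n := by
  refine summable_of_norm_succ_le_of_tendsto hy
    (by simpa using (tendsto_add_natCast_div_natCast_add_one a).mul_const |y|) fun n => ?_
  have hd : d (n + 1) ≤ (a + n) / (n + 1) * d n := by
    rw [div_mul_eq_mul_div, le_div_iff₀ (by positivity)]
    linarith [h.succ_mul_le n]
  simp only [norm_mul, norm_pow, Real.norm_eq_abs, abs_of_nonneg (h.nonneg _), pow_succ]
  calc d (n + 1) * (|y| ^ n * |y|) ≤ (a + n) / (n + 1) * d n * (|y| ^ n * |y|) := by gcongr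
    _ = (a + n) / (n + 1) * |y| * (d n * |y| ^ n) := by ring

lemma hasDerivAt_tsum_mul_pow (h : CoeffRatioLE a d) {y : ℝ} (hy : |y| < 1) :
    HasDerivAt (fun x => ∑' n, d n * x ^ n) (∑' m : ℕ, ((m : ℝ) + 1) * d (m + 1) * y ^ m) y := by
  set r := (1 + |y|) / 2 with hr_def
  have hr : |r| < 1 := by rw [abs_of_nonneg (by positivity)]; linarith
  have hyr : y ∈ Set.Ioo (-r) r := abs_lt.1 (by linarith)
  have hderiv : Summable fun m : ℕ => ((m : ℝ) + 1) * d (m + 1) * y ^ m :=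
    h.succ_mul_succ.summable_mul_pow hy
  have hbound : Summable fun n => d n * (n * r ^ (n - 1)) := by
    refine (summable_nat_add_iff 1).1 ((h.succ_mul_succ.summable_mul_pow hr).congr fun m => ?_)
    push_cast
    ring_nf
  have key := hasDerivAt_tsum_of_isPreconnected hbound isOpen_Ioo (convex_Ioo _ _).isPreconnected
    (fun n x _ => (hasDerivAt_pow n x).const_mul (d n))
    (fun n x hx => by
      rw [Real.norm_eq_abs, abs_mul, abs_mul, abs_pow, abs_of_nonneg (h.nonneg n), Nat.abs_cast]
      have := h.nonneg n
      have := (abs_lt.2 hx).le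
      gcongr)
    (show (0 : ℝ) ∈ Set.Ioo (-r) r by constructor <;> linarith [abs_nonneg y])
    (h.summable_mul_pow (by simp)) hyr
  have hshift :
      ∑' n, d n * (n * y ^ (n - 1)) = ∑' m : ℕ, ((m : ℝ) + 1) * d (m + 1) * y ^ m := by
    rw [((summable_nat_add_iff 1).1 (hderiv.congr fun m => ?_)).tsum_eq_zero_add]
    · simp only [CharP.cast_eq_zero, zero_mul, mul_zero, zero_add, Nat.cast_add, Nat.cast_one,
        add_tsub_cancel_right]
      exact tsum_congr fun m => by ring
    · push_cast
      ring_nf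
  exact hshift ▸ key

lemma one_sub_mul_tsum_deriv_le (h : CoeffRatioLE a d) {y : ℝ} (hy0 : 0 ≤ y) (hy1 : y < 1) :
    (1 - y) * ∑' m : ℕ, ((m : ℝ) + 1) * d (m + 1) * y ^ m ≤ a * ∑' n, d n * y ^ n := by
  have hy : |y| < 1 := by rwa [abs_of_nonneg hy0]
  have hS := h.summable_mul_pow hy
  have hS' := h.succ_mul_succ.summable_mul_pow hy
  have hN : Summable fun n : ℕ => (n : ℝ) * d n * y ^ n :=
    (summable_nat_add_iff 1).1 ((hS'.mul_left y).congr fun m => by push_cast; ring)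
  have hshift :
      ∑' n : ℕ, (n : ℝ) * d n * y ^ n = y * ∑' m : ℕ, ((m : ℝ) + 1) * d (m + 1) * y ^ m := by
    rw [hN.tsum_eq_zero_add, ← tsum_mul_left]
    simp only [Nat.cast_zero, zero_mul, zero_add, Nat.cast_add, Nat.cast_one, pow_succ]
    exact tsum_congr fun m => by ring
  have hcoeff : ∑' m : ℕ, ((m : ℝ) + 1) * d (m + 1) * y ^ m ≤ ∑' n : ℕ, (a + n) * d n * y ^ n :=
    hS'.tsum_le_tsum (fun n => mul_le_mul_of_nonneg_right (h.succ_mul_le n) (by positivity))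
      ((hS.mul_left a).add hN |>.congr fun n => by ring)
  have hsplit : ∑' n : ℕ, (a + n) * d n * y ^ n = a * ∑' n, d n * y ^ n + y *
      ∑' m : ℕ, ((m : ℝ) + 1) * d (m + 1) * y ^ m := by
    rw [← hshift, ← tsum_mul_left, ← (hS.mul_left a).tsum_add hN]
    exact tsum_congr fun n => by ring
  linarith

lemma monotoneOn_tsum_mul_pow (h : CoeffRatioLE a d) :
    MonotoneOn (fun y => ∑' n, d n * y ^ n) (Set.Ico 0 1) := by
  intro x ⟨hx0, hx1⟩ y ⟨hy0, hy1⟩ hxy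
  exact (h.summable_mul_pow (by rwa [abs_of_nonneg hx0])).tsum_le_tsum
    (fun n => mul_le_mul_of_nonneg_left (pow_le_pow_left₀ hx0 hxy n) (h.nonneg n))
    (h.summable_mul_pow (by rwa [abs_of_nonneg hy0]))

lemma antitoneOn_one_sub_rpow_mul_tsum (h : CoeffRatioLE a d) :
    AntitoneOn (fun y => (1 - y) ^ a * ∑' n, d n * y ^ n) (Set.Ico 0 1) := by
  have hderiv : ∀ y ∈ Set.Ico (0 : ℝ) 1, HasDerivAt (fun x => (1 - x) ^ a * ∑' n, d n * x ^ n)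
      ((-1) * a * (1 - y) ^ (a - 1) * ∑' n, d n * y ^ n +
        (1 - y) ^ a * ∑' m : ℕ, ((m : ℝ) + 1) * d (m + 1) * y ^ m) y := fun y ⟨hy0, hy1⟩ =>
    (((hasDerivAt_id y).const_sub 1).rpow_const (Or.inl (by simp; linarith))).mul
      (h.hasDerivAt_tsum_mul_pow (by rwa [abs_of_nonneg hy0]))
  refine antitoneOn_of_hasDerivWithinAt_nonpos (convex_Ico 0 1)
    (fun y hy => (hderiv y hy).continuousAt.continuousWithinAt)
    (fun y hy => (hderiv y (Set.Ioo_subset_Ico_self (by simpa using hy))).hasDerivWithinAt)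
    fun y hy => ?_
  rw [interior_Ico] at hy
  have hy1 : 0 < 1 - y := by linarith [hy.2]
  have hpow : (1 - y) ^ a = (1 - y) ^ (a - 1) * (1 - y) := by
    rw [← rpow_add_one hy1.ne', sub_add_cancel]
  have := h.one_sub_mul_tsum_deriv_le hy.1.le hy.2
  rw [hpow]
  nlinarith [rpow_pos_of_pos hy1 (a - 1)]

end CoeffRatioLE

noncomputable def twoF1Coeff (a b c z : ℝ) (n : ℕ) : ℝ :=
  poch a n * poch b n / poch c n * z ^ n / (Nat.factorial n : ℝ)

lemma twoF1_mul_eq_tsum (a b c z w : ℝ) :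
    twoF1 a b c (z * w) = ∑' n, twoF1Coeff a b c z n * w ^ n :=
  tsum_congr fun n => by simp only [twoF1Coeff, mul_pow]; ring

lemma twoF1Coeff_zero (a b c z : ℝ) : twoF1Coeff a b c z 0 = 1 := by
  simp [twoF1Coeff, poch]

lemma poch_pos {x : ℝ} (hx : 0 < x) (n : ℕ) : 0 < poch x n :=
  Finset.prod_pos fun _ _ => by positivity

lemma poch_nonneg {x : ℝ} (hx : 0 ≤ x) (n : ℕ) : 0 ≤ poch x n :=
  Finset.prod_nonneg fun _ _ => by positivity

lemma succ_mul_twoF1Coeff_succ (a b : ℝ) {c : ℝ} (hc : 0 < c) (z : ℝ) (n : ℕ) :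
    ((n : ℝ) + 1) * twoF1Coeff a b c z (n + 1) =
      (a + n) * ((b + n) * z / (c + n)) * twoF1Coeff a b c z n := by
  have := (poch_pos hc n).ne'
  have : c + n ≠ 0 := by positivity
  simp only [twoF1Coeff, poch, Finset.prod_range_succ, Nat.factorial_succ, pow_succ]
  push_cast
  field_simp

lemma coeffRatioLE_twoF1Coeff {a b c z : ℝ} (ha : 0 ≤ a) (hb : 0 ≤ b) (hbc : b ≤ c) (hc : 0 < c)
    (hz0 : 0 ≤ z) (hz1 : z ≤ 1) : CoeffRatioLE a (twoF1Coeff a b c z) := by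
  have hnonneg (n : ℕ) : 0 ≤ twoF1Coeff a b c z n := by
    unfold twoF1Coeff
    have := poch_nonneg ha n; have := poch_nonneg hb n; have := poch_nonneg hc.le n
    positivity
  refine ⟨hnonneg, fun n => ?_⟩
  rw [succ_mul_twoF1Coeff_succ a b hc z n, mul_assoc]
  refine mul_le_mul_of_nonneg_left (mul_le_of_le_one_left (hnonneg n) ?_) (by positivity)
  rw [div_le_one (by positivity)]
  nlinarith

lemma sub_le_quarter_mul_div {A B s t : ℝ} (ht : 0 < t) (hts : t ≤ s) (hA : A ≤ 1)
    (hAB : t * A ≤ s * B) : A - B ≤ 1 / 4 * (s / t) := by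
  rw [← mul_div_assoc, le_div_iff₀ ht]
  nlinarith [sq_nonneg (s - 2 * t), mul_le_mul_of_nonneg_left hA (sub_nonneg.2 hts)]

theorem stmt19 (a b c z₁ z₂ z₃ : ℝ) (ha : 0 < a) (hb : 0 < b) (hbc : b < c)
    (hz₁ : z₁ ∈ Set.Icc (0:ℝ) 1) (hz₂ : z₂ ∈ Set.Icc (0:ℝ) 1)
    (hz₃ : z₃ ∈ Set.Ico (0:ℝ) 1) :
    |(1 - z₂ * z₃) ^ a * twoF1 a b c (z₁ * z₂ * z₃) -
        (1 - z₃) ^ a * twoF1 a b c (z₁ * z₃)| ≤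
      1 / 4 * ((1 - z₂ * z₃) ^ a / (1 - z₃) ^ a) := by
  have hd := coeffRatioLE_twoF1Coeff ha.le hb.le hbc.le (hb.trans hbc) hz₁.1 hz₁.2
  have hxy : z₂ * z₃ ≤ z₃ := mul_le_of_le_one_left hz₃.1 hz₂.2
  have hx : z₂ * z₃ ∈ Set.Ico (0 : ℝ) 1 := ⟨mul_nonneg hz₂.1 hz₃.1, hxy.trans_lt hz₃.2⟩
  have h0 : (0 : ℝ) ∈ Set.Ico (0 : ℝ) 1 := ⟨le_rfl, one_pos⟩
  have hG := hd.antitoneOn_one_sub_rpow_mul_tsum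
  have hGx : (1 - z₂ * z₃) ^ a * ∑' n, twoF1Coeff a b c z₁ n * (z₂ * z₃) ^ n ≤ 1 := by
    have hF0 : ∑' n, twoF1Coeff a b c z₁ n * (0 : ℝ) ^ n = 1 := by
      rw [tsum_eq_single 0 fun n hn => by simp [hn]]
      simp [twoF1Coeff_zero]
    simpa [hF0] using hG h0 hx hx.1
  have hF := hd.monotoneOn_tsum_mul_pow hx hz₃ hxy
  have hs : 0 ≤ (1 - z₂ * z₃) ^ a := rpow_nonneg (by linarith [hx.2]) a
  have ht : 0 < (1 - z₃) ^ a := rpow_pos_of_pos (by linarith [hz₃.2]) a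
  rw [mul_assoc, twoF1_mul_eq_tsum, twoF1_mul_eq_tsum,
    abs_of_nonneg (sub_nonneg.2 (hG hx hz₃ hxy))]
  refine sub_le_quarter_mul_div ht (rpow_le_rpow (by linarith [hz₃.2]) (by linarith) ha.le) hGx ?_
  have := mul_le_mul_of_nonneg_left hF (mul_nonneg ht.le hs)
  simp only at this
  linarith
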